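/- Lower bounds on the total variation distance: for all integers 1 ≤ m ≤ n and every real p ∈ [0,1], ‖Q_{m,n,p} − Uni_n‖_TV ≥ (|2p−1|/(4n))·| 1 − ((m-1)!/(n+1)^{m-1})·Σ_{s=0}^{m-1} (n+1)^{s}/s! |; moreover, for p = 1/2, ‖Q_{m,n,1/2} − Uni_n‖_TV ≥ (1/2)·| n^{m-2}/(2(n+1)^{m-1}) − (1/(2(n+1)))·( 1 + (n−2m+2)/(n(n−m+1)) ) |. -/

import Mathlib

/-- `T m n s = C(m-1,s)·(n-s)^(m-s-2)·(s+1)^(s-1)` in `ℝ`, with integer (possibly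
negative) exponents interpreted via `zpow`. -/
noncomputable def T (m n s : ℕ) : ℝ :=
  ((m - 1).choose s : ℝ) * ((n : ℝ) - s) ^ ((m : ℤ) - s - 2) * ((s : ℝ) + 1) ^ ((s : ℤ) - 1)

/-- `Q m n p j` is the conditional probability that the last of `m` cars prefers spot
`j ∈ {1,…,n}` given that all cars park, in the probabilistic parking model on `n` spots
with forward-probability `p` (Theorem 3 of Durmić–Han–Harris–Ribeiro–Yin):
`Q_{m,n,p}(j) = (n-m+2)/((n-m+1)(n+1)) − (1/(n+1)^(m-1))·
  [ p·Σ_{s=n-j+1}^{m-1} T(s) + (1-p)·Σ_{s=j}^{m-1} T(s) ]`. -/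
noncomputable def Q (m n : ℕ) (p : ℝ) (j : ℕ) : ℝ :=
  ((n : ℝ) - m + 2) / (((n : ℝ) - m + 1) * ((n : ℝ) + 1)) -
    1 / ((n : ℝ) + 1) ^ (m - 1) *
      (p * ∑ s ∈ Finset.Icc (n - j + 1) (m - 1), T m n s +
        (1 - p) * ∑ s ∈ Finset.Icc j (m - 1), T m n s)

/-- Total variation distance between `Q m n p` and the uniform distribution on `{1,…,n}`:
`(1/2)·Σ_{j=1}^n |Q_{m,n,p}(j) − 1/n|`. -/
noncomputable def tvUni (m n : ℕ) (p : ℝ) : ℝ :=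
  1 / 2 * ∑ j ∈ Finset.Icc 1 n, |Q m n p j - 1 / (n : ℝ)|

/-!
Test `Q_{m,n,p} − Uni_n` against the centred linear weight `w_j = n + 1 − 2j`: since `|w_j| ≤ n`
and `∑ w_j = 0`, the total variation is at least `|∑_j w_j Q(j)| / (2n)`. Exchanging the order of
summation turns this weighted sum into `(2p − 1)/(n+1)^{m−1} · ∑_s s(n − s) T(s)`, which Abel's
identities over `i + j = N`,
  `∑ C(N,i) (x+i)^{i−1} (y+j)^j = (x+y+N)^N / x`,
  `∑ C(N,i) (x+i)^i (y+j)^j = N! ∑_{k ≤ N} (x+y+N)^k / k!`,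
evaluate to `(m−1)! ∑_{s<m} (n+1)^s / s! − (n+1)^{m−1}`. The bound for `p = 1/2` is the single
term `j = n` of the total variation, where `∑_s T(s)` is given by the symmetric Abel identity.
-/

open Finset
open scoped Nat

noncomputable def abelSum (N : ℕ) (x y : ℝ) : ℝ :=
  ∑ ij ∈ antidiagonal N, (N.choose ij.1 : ℝ) * ((x + ij.1) ^ ((ij.1 : ℤ) - 1) * (y + ij.2) ^ ij.2)

noncomputable def abelPowSum (N : ℕ) (x y : ℝ) : ℝ :=
  ∑ ij ∈ antidiagonal N, (N.choose ij.1 : ℝ) * ((x + ij.1) ^ ij.1 * (y + ij.2) ^ ij.2)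

lemma zpow_natCast_sub_one_mul_self {a : ℝ} (ha : a ≠ 0) (k : ℕ) :
    a ^ ((k : ℤ) - 1) * a = a ^ k := by
  rw [zpow_sub_one₀ ha, zpow_natCast, inv_mul_cancel_right₀ ha]

lemma abelSum_succ (N : ℕ) {x : ℝ} (hx : 0 < x) (y : ℝ) :
    abelSum (N + 1) x y =
      (x + y + N + 1) * abelSum N x (y + 1) - abelPowSum N x (y + 1) + abelPowSum N (x + 1) y := by
  rw [abelSum, sum_antidiagonal_choose_succ_mul
    (fun i j => (x + i) ^ ((i : ℤ) - 1) * (y + j) ^ j)]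
  congr 1
  · rw [abelSum, abelPowSum, mul_sum, ← sum_sub_distrib]
    refine sum_congr rfl fun ij hij => ?_
    have hN : (N : ℝ) = ij.1 + ij.2 := by exact_mod_cast (mem_antidiagonal.mp hij).symm
    rw [← zpow_natCast_sub_one_mul_self (by positivity : x + ij.1 ≠ 0), hN]
    push_cast
    ring
  · refine sum_congr rfl fun ij hij => ?_
    rw [Nat.choose_symm_of_eq_add (mem_antidiagonal.mp hij).symm]
    push_cast
    rw [add_sub_cancel_right, zpow_natCast]
    ring

lemma abelPowSum_succ (N : ℕ) {x : ℝ} (hx : 0 < x) (y : ℝ) :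
    abelPowSum (N + 1) x y = x * abelSum (N + 1) x y + (N + 1) * abelPowSum N (x + 1) y := by
  have hshift : ∑ ij ∈ antidiagonal (N + 1),
      ((N + 1).choose ij.1 : ℝ) * (ij.1 * ((x + ij.1) ^ ((ij.1 : ℤ) - 1) * (y + ij.2) ^ ij.2)) =
        (N + 1) * abelPowSum N (x + 1) y := by
    rw [Nat.sum_antidiagonal_succ, abelPowSum, mul_sum]
    simp only [CharP.cast_eq_zero, zero_mul, mul_zero, zero_add]
    refine sum_congr rfl fun ij _ => ?_
    have hc : ((N + 1).choose (ij.1 + 1) : ℝ) * (ij.1 + 1) = (N + 1) * N.choose ij.1 := by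
      exact_mod_cast (Nat.add_one_mul_choose_eq N ij.1).symm
    push_cast
    rw [add_sub_cancel_right, zpow_natCast]
    linear_combination ((x + 1 + ij.1) ^ ij.1 * (y + ij.2) ^ ij.2) * hc
  rw [abelPowSum, abelSum, ← hshift, mul_sum, ← sum_add_distrib]
  refine sum_congr rfl fun ij _ => ?_
  rw [← zpow_natCast_sub_one_mul_self (by positivity : x + ij.1 ≠ 0)]
  ring

lemma abelSum_eq_and_abelPowSum_eq (N : ℕ) : ∀ {x : ℝ}, 0 < x → ∀ y : ℝ,
    abelSum N x y = (x + y + N) ^ N / x ∧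
      abelPowSum N x y = N ! * ∑ k ∈ range (N + 1), (x + y + N) ^ k / k ! := by
  induction N with
  | zero => intro x hx y; simp [abelSum, abelPowSum]
  | succ N ih =>
    intro x hx y
    -- `abelPowSum N x y` depends only on `x + y`, so the two `abelPowSum` terms cancel.
    have hshift : abelPowSum N x (y + 1) = abelPowSum N (x + 1) y := by
      rw [(ih hx _).2, (ih (by positivity) _).2]
      ring_nf
    have hA : abelSum (N + 1) x y = (x + y + (N + 1 : ℕ)) ^ (N + 1) / x := by
      rw [abelSum_succ N hx, hshift, sub_add_cancel, (ih hx _).1]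
      push_cast
      ring
    refine ⟨hA, ?_⟩
    rw [abelPowSum_succ N hx, hA, (ih (by positivity) y).2, sum_range_succ _ (N + 1),
      Nat.factorial_succ, show x + 1 + y + N = x + y + (N + 1 : ℕ) by push_cast; ring]
    field_simp
    push_cast
    ring

lemma abelSum_eq (N : ℕ) {x : ℝ} (hx : 0 < x) (y : ℝ) :
    abelSum N x y = (x + y + N) ^ N / x :=
  (abelSum_eq_and_abelPowSum_eq N hx y).1

lemma abelPowSum_eq (N : ℕ) {x : ℝ} (hx : 0 < x) (y : ℝ) :
    abelPowSum N x y = N ! * ∑ k ∈ range (N + 1), (x + y + N) ^ k / k ! :=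
  (abelSum_eq_and_abelPowSum_eq N hx y).2

lemma sum_antidiagonal_abel_symm (N : ℕ) {x y : ℝ} (hx : 0 < x) (hy : 0 < y) :
    ∑ ij ∈ antidiagonal N,
        (N.choose ij.1 : ℝ) * ((x + ij.1) ^ ((ij.1 : ℤ) - 1) * (y + ij.2) ^ ((ij.2 : ℤ) - 1)) =
      (1 / x + 1 / y) * (x + y + N) ^ ((N : ℤ) - 1) := by
  have hz : x + y + N ≠ 0 := by positivity
  have hswap : abelSum N y x = ∑ ij ∈ antidiagonal N,
      (N.choose ij.2 : ℝ) * ((y + ij.2) ^ ((ij.2 : ℤ) - 1) * (x + ij.1) ^ ij.1) := by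
    rw [abelSum, ← Nat.sum_antidiagonal_swap]
    rfl
  have hsplit : (x + y + N) * ∑ ij ∈ antidiagonal N,
        (N.choose ij.1 : ℝ) * ((x + ij.1) ^ ((ij.1 : ℤ) - 1) * (y + ij.2) ^ ((ij.2 : ℤ) - 1)) =
      abelSum N y x + abelSum N x y := by
    rw [hswap, abelSum, mul_sum, ← sum_add_distrib]
    refine sum_congr rfl fun ij hij => ?_
    have hN : (N : ℝ) = ij.1 + ij.2 := by exact_mod_cast (mem_antidiagonal.mp hij).symm
    rw [Nat.choose_symm_of_eq_add (mem_antidiagonal.mp hij).symm,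
      ← zpow_natCast_sub_one_mul_self (by positivity : x + ij.1 ≠ 0) ij.1,
      ← zpow_natCast_sub_one_mul_self (by positivity : y + ij.2 ≠ 0) ij.2, hN]
    ring
  apply mul_left_cancel₀ hz
  rw [hsplit, abelSum_eq N hy, abelSum_eq N hx, zpow_sub_one₀ hz, zpow_natCast]
  field_simp
  ring

lemma sum_Icc_zero_eq_sum_antidiagonal (M : ℕ) (g : ℕ → ℝ) :
    ∑ s ∈ Icc 0 M, g s = ∑ ij ∈ antidiagonal M, g ij.1 := by
  rw [Nat.sum_antidiagonal_eq_sum_range_succ_mk, Nat.range_succ_eq_Icc_zero]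

lemma T_succ_eq {M n : ℕ} {ij : ℕ × ℕ} (hij : ij ∈ antidiagonal M) :
    T (M + 1) n ij.1 =
      (M.choose ij.1 : ℝ) *
        ((1 + ij.1) ^ ((ij.1 : ℤ) - 1) * ((n - M : ℝ) + ij.2) ^ ((ij.2 : ℤ) - 1)) := by
  obtain ⟨i, j⟩ := ij
  obtain rfl : i + j = M := mem_antidiagonal.mp hij
  rw [T, Nat.add_sub_cancel]
  push_cast
  ring_nf

lemma sum_T_eq {M n : ℕ} (h : M < n) :
    ∑ s ∈ Icc 0 M, T (M + 1) n s = (1 + 1 / ((n : ℝ) - M)) * ((n : ℝ) + 1) ^ ((M : ℤ) - 1) := by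
  have hnM : (0 : ℝ) < n - M := sub_pos.mpr (by exact_mod_cast h)
  rw [sum_Icc_zero_eq_sum_antidiagonal, sum_congr rfl fun ij hij => T_succ_eq hij,
    sum_antidiagonal_abel_symm M one_pos hnM]
  ring_nf

lemma sum_mul_T_eq {M n : ℕ} (h : M < n) :
    ∑ s ∈ Icc 0 M, (s : ℝ) * (n - s) * T (M + 1) n s =
      M ! * ∑ k ∈ range (M + 1), ((n : ℝ) + 1) ^ k / (k ! : ℝ) - ((n : ℝ) + 1) ^ M := by
  have hnM : (0 : ℝ) < n - M := sub_pos.mpr (by exact_mod_cast h)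
  have hterm : ∀ ij ∈ antidiagonal M, (ij.1 : ℝ) * (n - ij.1) * T (M + 1) n ij.1 =
      (M.choose ij.1 : ℝ) * ((1 + ij.1) ^ ij.1 * ((n - M : ℝ) + ij.2) ^ ij.2) -
        (M.choose ij.1 : ℝ) * ((1 + ij.1) ^ ((ij.1 : ℤ) - 1) * ((n - M : ℝ) + ij.2) ^ ij.2) := by
    intro ij hij
    have hM : (M : ℝ) = ij.1 + ij.2 := by exact_mod_cast (mem_antidiagonal.mp hij).symm
    rw [T_succ_eq hij,
      ← zpow_natCast_sub_one_mul_self (by positivity : (1 : ℝ) + ij.1 ≠ 0) ij.1,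
      ← zpow_natCast_sub_one_mul_self (by positivity : (n - M : ℝ) + ij.2 ≠ 0) ij.2, hM]
    ring
  rw [sum_Icc_zero_eq_sum_antidiagonal, sum_congr rfl hterm, sum_sub_distrib,
    ← abelPowSum, ← abelSum, abelPowSum_eq M one_pos, abelSum_eq M one_pos]
  ring_nf

noncomputable def centeredWeight (n j : ℕ) : ℝ := (n : ℝ) + 1 - 2 * j

lemma sum_Icc_centeredWeight (n k : ℕ) :
    ∑ j ∈ Icc 1 k, centeredWeight n j = k * ((n : ℝ) - k) := by
  induction k with
  | zero => simp
  | succ k ih =>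
    rw [sum_Icc_succ_top (by omega), ih, centeredWeight]
    push_cast
    ring

lemma sum_centeredWeight (n : ℕ) : ∑ j ∈ Icc 1 n, centeredWeight n j = 0 := by
  rw [sum_Icc_centeredWeight, sub_self, mul_zero]

lemma abs_sum_centeredWeight_mul_le (n : ℕ) (d : ℕ → ℝ) :
    |∑ j ∈ Icc 1 n, centeredWeight n j * d j| ≤ n * ∑ j ∈ Icc 1 n, |d j| := by
  rw [mul_sum]
  refine (abs_sum_le_sum_abs _ _).trans (sum_le_sum fun j hj => ?_)
  have hj : (1 : ℝ) ≤ j ∧ (j : ℝ) ≤ n := by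
    obtain ⟨h₁, h₂⟩ := mem_Icc.mp hj
    exact ⟨by exact_mod_cast h₁, by exact_mod_cast h₂⟩
  rw [abs_mul]
  gcongr
  rw [centeredWeight, abs_le]
  constructor <;> linarith

lemma sum_centeredWeight_mul_sum_Icc {M n : ℕ} (h : M ≤ n) (f : ℕ → ℝ) :
    ∑ j ∈ Icc 1 n, centeredWeight n j * ∑ s ∈ Icc j M, f s =
      ∑ s ∈ Icc 0 M, (s : ℝ) * (n - s) * f s := by
  simp_rw [mul_sum]
  rw [sum_comm' (t' := Icc 0 M) (s' := fun s => Icc 1 s)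
    (by intro j s; simp only [mem_Icc]; omega)]
  refine sum_congr rfl fun s _ => ?_
  rw [← sum_mul, sum_Icc_centeredWeight]

lemma sum_centeredWeight_mul_reflect (n : ℕ) (F : ℕ → ℝ) :
    ∑ j ∈ Icc 1 n, centeredWeight n j * F (n - j + 1) =
      -∑ j ∈ Icc 1 n, centeredWeight n j * F j := by
  rw [← sum_neg_distrib]
  refine sum_nbij' (fun j => n + 1 - j) (fun j => n + 1 - j) ?_ ?_ ?_ ?_ ?_ <;>
    intro j hj <;> simp only [mem_Icc] at hj ⊢
  · omega
  · omega
  · omega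
  · omega
  · rw [show n - j + 1 = n + 1 - j by omega, centeredWeight, centeredWeight,
      Nat.cast_sub (by omega)]
    push_cast
    ring

lemma sum_centeredWeight_mul_Q_sub {m n : ℕ} (hm : 1 ≤ m) (hmn : m ≤ n) (p : ℝ) :
    ∑ j ∈ Icc 1 n, centeredWeight n j * (Q m n p j - 1 / n) =
      (1 - 2 * p) * (1 - ((m - 1) ! : ℝ) / ((n : ℝ) + 1) ^ (m - 1) *
        ∑ s ∈ range m, ((n : ℝ) + 1) ^ s / (s ! : ℝ)) := by
  obtain ⟨M, rfl⟩ : ∃ M, m = M + 1 := ⟨m - 1, by omega⟩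
  set S : ℕ → ℝ := fun k => ∑ s ∈ Icc k M, T (M + 1) n s
  have hS : ∑ j ∈ Icc 1 n, centeredWeight n j * S j =
      M ! * ∑ k ∈ range (M + 1), ((n : ℝ) + 1) ^ k / (k ! : ℝ) - ((n : ℝ) + 1) ^ M := by
    rw [sum_centeredWeight_mul_sum_Icc (by omega), sum_mul_T_eq hmn]
  have hQ : ∀ j, centeredWeight n j * (Q (M + 1) n p j - 1 / n) =
      ((n - M + 1 : ℝ) / ((n - M) * (n + 1)) - 1 / n) * centeredWeight n j -
        1 / ((n : ℝ) + 1) ^ M * (p * (centeredWeight n j * S (n - j + 1)) +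
          (1 - p) * (centeredWeight n j * S j)) := by
    intro j
    rw [Q, Nat.add_sub_cancel]
    push_cast
    ring
  simp_rw [hQ]
  rw [sum_sub_distrib, ← mul_sum, ← mul_sum, sum_add_distrib, ← mul_sum, ← mul_sum,
    sum_centeredWeight, sum_centeredWeight_mul_reflect, hS, Nat.add_sub_cancel]
  field_simp
  ring

lemma Q_half_self_sub_inv_eq {m n : ℕ} (hm : 1 ≤ m) (hmn : m ≤ n) :
    Q m n (1 / 2) n - 1 / n =
      (n : ℝ) ^ ((m : ℤ) - 2) / (2 * ((n : ℝ) + 1) ^ (m - 1)) -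
        1 / (2 * ((n : ℝ) + 1)) * (1 + ((n : ℝ) - 2 * m + 2) / ((n : ℝ) * ((n : ℝ) - m + 1))) := by
  obtain ⟨M, rfl⟩ : ∃ M, m = M + 1 := ⟨m - 1, by omega⟩
  have hn : (0 : ℝ) < n := by exact_mod_cast (show 0 < n by omega)
  have hnM : (0 : ℝ) < n - M := sub_pos.mpr (by exact_mod_cast hmn)
  have hsum : ∑ s ∈ Icc 1 M, T (M + 1) n s =
      (1 + 1 / ((n : ℝ) - M)) * ((n : ℝ) + 1) ^ ((M : ℤ) - 1) - (n : ℝ) ^ ((M : ℤ) - 1) := by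
    rw [← sum_T_eq hmn, ← add_sum_Ioc_eq_sum_Icc (Nat.zero_le M), ← Icc_add_one_left_eq_Ioc, T]
    norm_num
    ring_nf
  rw [Q, Nat.add_sub_cancel, Nat.sub_self, zero_add, Icc_eq_empty (by omega : ¬n ≤ M), sum_empty,
    hsum, zpow_sub_one₀ (by positivity : (n : ℝ) + 1 ≠ 0), zpow_natCast,
    show ((M + 1 : ℕ) : ℤ) - 2 = (M : ℤ) - 1 by push_cast; ring]
  push_cast
  rw [show (n : ℝ) - (M + 1) + 1 = n - M by ring, show (n : ℝ) - (M + 1) + 2 = n - M + 1 by ring]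
  field_simp
  ring

/-- Lower bounds on the total variation distance: for `1 ≤ m ≤ n` and `p ∈ [0,1]`,
`‖Q_{m,n,p} − Uni_n‖_TV ≥ (|2p−1|/(4n))·|1 − ((m-1)!/(n+1)^(m-1))·Σ_{s=0}^{m-1}(n+1)^s/s!|`;
moreover for `p = 1/2`,
`‖Q_{m,n,1/2} − Uni_n‖_TV ≥ (1/2)·|n^(m-2)/(2(n+1)^(m-1)) − (1/(2(n+1)))(1 + (n−2m+2)/(n(n−m+1)))|`,
where `n^(m-2)` is interpreted in `ℝ` (`zpow`). -/
theorem tv_lower_bounds (m n : ℕ) (hm : 1 ≤ m) (hmn : m ≤ n) :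
    (∀ p : ℝ, 0 ≤ p → p ≤ 1 →
      |2 * p - 1| / (4 * (n : ℝ)) *
          |1 - ((m - 1).factorial : ℝ) / ((n : ℝ) + 1) ^ (m - 1) *
              ∑ s ∈ Finset.range m, ((n : ℝ) + 1) ^ s / (s.factorial : ℝ)|
        ≤ tvUni m n p)
    ∧
    (1 / 2 *
        |(n : ℝ) ^ ((m : ℤ) - 2) / (2 * ((n : ℝ) + 1) ^ (m - 1)) -
            1 / (2 * ((n : ℝ) + 1)) *
              (1 + ((n : ℝ) - 2 * m + 2) / ((n : ℝ) * ((n : ℝ) - m + 1)))|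
      ≤ tvUni m n (1 / 2)) := by
  have hn : (0 : ℝ) < n := by exact_mod_cast (show 0 < n by omega)
  refine ⟨fun p _ _ => ?_, ?_⟩
  · have hw := abs_sum_centeredWeight_mul_le n (fun j => Q m n p j - 1 / n)
    rw [sum_centeredWeight_mul_Q_sub hm hmn, abs_mul, abs_sub_comm 1 (2 * p)] at hw
    have hd : 0 ≤ ∑ j ∈ Icc 1 n, |Q m n p j - 1 / n| := sum_nonneg fun j _ => abs_nonneg _
    rw [tvUni, div_mul_eq_mul_div, div_le_iff₀ (by positivity)]
    nlinarith
  · rw [tvUni, ← Q_half_self_sub_inv_eq hm hmn]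
    have := single_le_sum (fun j _ => abs_nonneg (Q m n (1 / 2) j - 1 / n))
      (mem_Icc.mpr ⟨hm.trans hmn, le_rfl⟩)
    linarith
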